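/- arXiv:2307.13402 — 5 statements merged into one kernel-verified Lean document; each statement's English description precedes it below -/
import Mathlib

section
/- Let q, λ : [0,T] → ℝⁿ be C² curves with q̈ = f(q) + λ and λ̈ = (Df(q))ᵀ λ on [0,T], and suppose the boundary conditions λ̇(T) = ∇_q φ(q(T), q̇(T)) and λ(T) = -∇_v φ(q(T), q̇(T)) hold. Then for every C² variation (δq, δλ) : [0,T] → ℝⁿ × ℝⁿ with δq(0) = 0 and δq̇(0) = 0, the first variation of the new augmented objective vanishes: d/ds |_{s=0} [ φ(q(T)+s δq(T), q̇(T)+s δq̇(T)) + ⟨λ(T)+s δλ(T), q̇(T)+s δq̇(T)⟩ - ⟨λ(0)+s δλ(0), q̇(0)⟩ + ∫₀ᵀ ( ½‖λ+s δλ‖² - ⟨λ̇+s δλ̇, q̇+s δq̇⟩ - ⟨λ+s δλ, f(q+s δq)⟩ - ⟨λ+s δλ, λ+s δλ⟩ ) dt ] = 0. -/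
/-!
Differentiating under the integral sign (legitimate because the integrand is a `C¹` function
`L` of the jet `(q, q̇, λ, λ̇)`, which depends continuously on `t`) turns the first variation
into boundary terms plus `∫₀ᵀ DL(q, q̇, λ, λ̇)(δq, δq̇, δλ, δλ̇) dt`. Along solutions of
`q̈ = f(q) + λ` and `λ̈ = Df(q)ᵀ λ` this integrand is exactly `-d/dt (⟪δλ, q̇⟫ + ⟪λ̇, δq⟫)`.
After integration, the term at `t = 0` cancels the variation of `-⟪λ(0), q̇(0)⟫` since
`δq(0) = 0`, and the term at `t = T` cancels the variations of `φ` and `⟪λ(T), q̇(T)⟫` by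
the two boundary conditions.
-/

open scoped RealInnerProductSpace

open Function Set

section ParametricIntegral

variable {E : Type*} [NormedAddCommGroup E] [NormedSpace ℝ E]

theorem hasDerivAt_intervalIntegral_of_continuous {F F' : ℝ → ℝ → E} {a b s₀ : ℝ}
    (hF : ∀ s, Continuous (F s)) (hF' : Continuous (uncurry F'))
    (hderiv : ∀ s t, HasDerivAt (F · t) (F' s t) s) :
    HasDerivAt (fun s => ∫ t in a..b, F s t) (∫ t in a..b, F' s₀ t) s₀ := by
  obtain ⟨C, hC⟩ := ((isCompact_closedBall s₀ 1).prod
    (isCompact_uIcc (a := a) (b := b))).exists_bound_of_continuousOn hF'.continuousOn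
  have hF's₀ : Continuous (F' s₀) := hF'.comp (continuous_const.prodMk continuous_id)
  refine (intervalIntegral.hasDerivAt_integral_of_dominated_loc_of_deriv_le (bound := fun _ => C)
    (Metric.ball_mem_nhds s₀ one_pos) (.of_forall fun s => (hF s).aestronglyMeasurable.restrict)
    ((hF s₀).intervalIntegrable a b) hF's₀.aestronglyMeasurable.restrict ?_
    intervalIntegrable_const (.of_forall fun t _ s _ => hderiv s t)).2
  exact .of_forall fun t ht s hs =>
    hC (s, t) ⟨Metric.ball_subset_closedBall hs, uIoc_subset_uIcc ht⟩

variable {V : Type*} [NormedAddCommGroup V] [NormedSpace ℝ V]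

theorem hasDerivAt_add_smul (x v : V) (s : ℝ) : HasDerivAt (fun s : ℝ => x + s • v) v s := by
  simpa using ((hasDerivAt_id s).smul_const v).const_add x

theorem hasLineDerivAt_intervalIntegral_comp {L : V → E} (hL : ContDiff ℝ 1 L) {X δX : ℝ → V}
    (hX : Continuous X) (hδX : Continuous δX) (a b : ℝ) :
    HasLineDerivAt ℝ (fun Y : ℝ → V => ∫ t in a..b, L (Y t))
      (∫ t in a..b, fderiv ℝ L (X t) (δX t)) X δX := by
  have hline : Continuous fun p : ℝ × ℝ => X p.2 + p.1 • δX p.2 := by fun_prop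
  have := hasDerivAt_intervalIntegral_of_continuous (a := a) (b := b) (s₀ := 0)
    (F := fun s t => L (X t + s • δX t)) (F' := fun s t => fderiv ℝ L (X t + s • δX t) (δX t))
    (fun s => hL.continuous.comp (by fun_prop))
    (((hL.continuous_fderiv one_ne_zero).comp hline).clm_apply (hδX.comp continuous_snd))
    (fun s t => (hL.differentiable one_ne_zero _).hasFDerivAt.comp_hasDerivAt s
      (hasDerivAt_add_smul (X t) (δX t) s))
  simpa [HasLineDerivAt] using this

end ParametricIntegral

theorem hasLineDerivAt_uncurry_of_differentiableAt {E F : Type*}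
    [NormedAddCommGroup E] [InnerProductSpace ℝ E] [CompleteSpace E]
    [NormedAddCommGroup F] [InnerProductSpace ℝ F] [CompleteSpace F]
    {φ : E → F → ℝ} {x : E} {v : F} (h : DifferentiableAt ℝ (uncurry φ) (x, v)) (a : E) (b : F) :
    HasLineDerivAt ℝ (uncurry φ)
      (⟪gradient (fun y => φ y v) x, a⟫ + ⟪gradient (fun w => φ x w) v, b⟫) (x, v) (a, b) := by
  have hx : fderiv ℝ (fun y => φ y v) x = (fderiv ℝ (uncurry φ) (x, v)).comp (.inl ℝ E F) := by
    have := h.hasFDerivAt.comp x (hasFDerivAt_prodMk_left (𝕜 := ℝ) x v)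
    exact this.fderiv
  have hv : fderiv ℝ (fun w => φ x w) v = (fderiv ℝ (uncurry φ) (x, v)).comp (.inr ℝ E F) := by
    have := h.hasFDerivAt.comp v (hasFDerivAt_prodMk_right (𝕜 := ℝ) x v)
    exact this.fderiv
  have key : fderiv ℝ (uncurry φ) (x, v) (a, b) =
      ⟪gradient (fun y => φ y v) x, a⟫ + ⟪gradient (fun w => φ x w) v, b⟫ := by
    rw [inner_gradient_left, inner_gradient_left, hx, hv]
    simp [← map_add]
  exact key ▸ h.hasFDerivAt.hasLineDerivAt (a, b)

section NewLagrangian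

variable {E : Type*} [NormedAddCommGroup E] [InnerProductSpace ℝ E]

noncomputable def jet (q l : ℝ → E) (t : ℝ) : E × E × E × E := (q t, deriv q t, l t, deriv l t)

theorem continuous_jet {q l : ℝ → E} (hq : ContDiff ℝ 1 q) (hl : ContDiff ℝ 1 l) :
    Continuous (jet q l) :=
  hq.continuous.prodMk <|
    hq.continuous_deriv_one.prodMk (hl.continuous.prodMk hl.continuous_deriv_one)

/-- The integrand of `J̃` at the jet `p = (q, q̇, λ, λ̇)`. -/
noncomputable def newLagrangian (f : E → E) (p : E × E × E × E) : ℝ :=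
  (1 / 2 : ℝ) * ‖p.2.2.1‖ ^ 2 - ⟪p.2.2.2, p.2.1⟫ - ⟪p.2.2.1, f p.1⟫ - ⟪p.2.2.1, p.2.2.1⟫

theorem contDiff_newLagrangian {f : E → E} (hf : ContDiff ℝ 1 f) :
    ContDiff ℝ 1 (newLagrangian f) := by
  have hv : ContDiff ℝ 1 fun p : E × E × E × E => p.2.1 := contDiff_snd.fst
  have hl : ContDiff ℝ 1 fun p : E × E × E × E => p.2.2.1 := contDiff_snd.snd.fst
  have hm : ContDiff ℝ 1 fun p : E × E × E × E => p.2.2.2 := contDiff_snd.snd.snd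
  exact (((contDiff_const.mul (hl.norm_sq ℝ)).sub (hm.inner ℝ hv)).sub
    (hl.inner ℝ (hf.comp contDiff_fst))).sub (hl.inner ℝ hl)

theorem differentiableAt_newLagrangian {f : E → E} {p : E × E × E × E}
    (hf : DifferentiableAt ℝ f p.1) : DifferentiableAt ℝ (newLagrangian f) p := by
  have hv : DifferentiableAt ℝ (fun p : E × E × E × E => p.2.1) p := differentiableAt_snd.fst
  have hl : DifferentiableAt ℝ (fun p : E × E × E × E => p.2.2.1) p :=
    differentiableAt_snd.snd.fst
  have hm : DifferentiableAt ℝ (fun p : E × E × E × E => p.2.2.2) p :=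
    differentiableAt_snd.snd.snd
  exact ((((differentiableAt_const _).mul (hl.norm_sq ℝ)).sub (hm.inner ℝ hv)).sub
    (hl.inner ℝ (hf.comp p differentiableAt_fst))).sub (hl.inner ℝ hl)

theorem hasLineDerivAt_newLagrangian {f : E → E} {x : E} (hf : DifferentiableAt ℝ f x)
    (v l m dx dv dl dm : E) :
    HasLineDerivAt ℝ (newLagrangian f)
      (-⟪l, dl⟫ - ⟪dm, v⟫ - ⟪m, dv⟫ - ⟪dl, f x⟫ - ⟪l, fderiv ℝ f x dx⟫)
      (x, v, l, m) (dx, dv, dl, dm) := by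
  have hfx : HasDerivAt (fun s : ℝ => f (x + s • dx)) (fderiv ℝ f x dx) 0 :=
    hf.hasFDerivAt.comp_hasDerivAt_of_eq 0 (hasDerivAt_add_smul x dx 0) (by simp)
  have := ((((hasDerivAt_add_smul l dl 0).norm_sq.const_mul (1 / 2 : ℝ)).sub
    ((hasDerivAt_add_smul m dm 0).inner ℝ (hasDerivAt_add_smul v dv 0))).sub
    ((hasDerivAt_add_smul l dl 0).inner ℝ hfx)).sub
    ((hasDerivAt_add_smul l dl 0).inner ℝ (hasDerivAt_add_smul l dl 0))
  simp only [HasLineDerivAt, newLagrangian, Prod.smul_mk, Prod.mk_add_mk]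
  convert this using 1
  · rfl
  · simp only [zero_smul, add_zero, real_inner_comm dl l]
    ring

theorem fderiv_newLagrangian_apply {f : E → E} {x : E} (hf : DifferentiableAt ℝ f x)
    (v l m dx dv dl dm : E) :
    fderiv ℝ (newLagrangian f) (x, v, l, m) (dx, dv, dl, dm) =
      -⟪l, dl⟫ - ⟪dm, v⟫ - ⟪m, dv⟫ - ⟪dl, f x⟫ - ⟪l, fderiv ℝ f x dx⟫ := by
  rw [← (differentiableAt_newLagrangian hf).lineDeriv_eq_fderiv,
    (hasLineDerivAt_newLagrangian hf v l m dx dv dl dm).lineDeriv]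

variable [CompleteSpace E]

theorem hasDerivAt_inner_add_inner_of_adjointSystem {f : E → E}
    {q l δq δl : ℝ → E} {t : ℝ} (hf : DifferentiableAt ℝ f (q t))
    (hq : DifferentiableAt ℝ (deriv q) t) (hl : DifferentiableAt ℝ (deriv l) t)
    (hδq : DifferentiableAt ℝ δq t) (hδl : DifferentiableAt ℝ δl t)
    (hq'' : deriv (deriv q) t = f (q t) + l t)
    (hl'' : deriv (deriv l) t = (fderiv ℝ f (q t)).adjoint (l t)) :
    HasDerivAt (fun t => ⟪δl t, deriv q t⟫ + ⟪deriv l t, δq t⟫)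
      (-fderiv ℝ (newLagrangian f) (jet q l t) (jet δq δl t)) t := by
  rw [jet, jet, fderiv_newLagrangian_apply hf]
  refine ((hδl.hasDerivAt.inner ℝ hq.hasDerivAt).add
    (hl.hasDerivAt.inner ℝ hδq.hasDerivAt)).congr_deriv ?_
  rw [hq'', hl'', ContinuousLinearMap.adjoint_inner_left, inner_add_right,
    real_inner_comm (δl t) (l t)]
  ring

theorem integral_fderiv_newLagrangian_of_adjointSystem {f : E → E} (hf : ContDiff ℝ 1 f)
    {q l δq δl : ℝ → E} (hq : ContDiff ℝ 2 q) (hl : ContDiff ℝ 2 l)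
    (hδq : ContDiff ℝ 1 δq) (hδl : ContDiff ℝ 1 δl) {T : ℝ} (hT : 0 ≤ T)
    (hq'' : ∀ t ∈ Icc 0 T, deriv (deriv q) t = f (q t) + l t)
    (hl'' : ∀ t ∈ Icc 0 T, deriv (deriv l) t = (fderiv ℝ f (q t)).adjoint (l t)) :
    ∫ t in 0..T, fderiv ℝ (newLagrangian f) (jet q l t) (jet δq δl t) =
      (⟪δl 0, deriv q 0⟫ + ⟪deriv l 0, δq 0⟫) - (⟪δl T, deriv q T⟫ + ⟪deriv l T, δq T⟫) := by
  rw [← neg_sub, eq_comm, neg_eq_iff_eq_neg, ← intervalIntegral.integral_neg, eq_comm]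
  refine intervalIntegral.integral_eq_sub_of_hasDerivAt
    (f := fun t => ⟪δl t, deriv q t⟫ + ⟪deriv l t, δq t⟫) (fun t ht => ?_)
    (Continuous.intervalIntegrable ?_ _ _)
  · rw [uIcc_of_le hT] at ht
    exact hasDerivAt_inner_add_inner_of_adjointSystem (hf.differentiable one_ne_zero _)
      (hq.differentiable_deriv_two t) (hl.differentiable_deriv_two t)
      (hδq.differentiable one_ne_zero t) (hδl.differentiable one_ne_zero t)
      (hq'' t ht) (hl'' t ht)
  · exact ((((contDiff_newLagrangian hf).continuous_fderiv one_ne_zero).comp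
      (continuous_jet (hq.of_le one_le_two) (hl.of_le one_le_two))).clm_apply
      (continuous_jet hδq hδl)).neg

end NewLagrangian

theorem firstVariation_new_augmented_objective_eq_zero_general (n : ℕ) (T : ℝ) (hT : 0 < T)
    (f : EuclideanSpace ℝ (Fin n) → EuclideanSpace ℝ (Fin n)) (hf : ContDiff ℝ 1 f)
    (φ : EuclideanSpace ℝ (Fin n) → EuclideanSpace ℝ (Fin n) → ℝ)
    (hφ : ContDiff ℝ 1 (Function.uncurry φ))
    (q l : ℝ → EuclideanSpace ℝ (Fin n))
    (hq : ContDiff ℝ 2 q) (hl : ContDiff ℝ 2 l)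
    (heq1 : ∀ t ∈ Set.Icc (0 : ℝ) T, deriv (deriv q) t = f (q t) + l t)
    (heq2 : ∀ t ∈ Set.Icc (0 : ℝ) T, deriv (deriv l) t = (fderiv ℝ f (q t)).adjoint (l t))
    (hbdq : deriv l T = gradient (fun x => φ x (deriv q T)) (q T))
    (hbdv : l T = -gradient (fun x => φ (q T) x) (deriv q T))
    (δq δl : ℝ → EuclideanSpace ℝ (Fin n))
    (hδq : ContDiff ℝ 2 δq) (hδl : ContDiff ℝ 2 δl)
    (hδq0 : δq 0 = 0) :
    deriv (fun s : ℝ =>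
      φ (q T + s • δq T) (deriv q T + s • deriv δq T) +
      ⟪l T + s • δl T, deriv q T + s • deriv δq T⟫ -
      ⟪l 0 + s • δl 0, deriv q 0⟫ +
      ∫ t in (0 : ℝ)..T,
        ((1 / 2 : ℝ) * ‖l t + s • δl t‖ ^ 2 -
          ⟪deriv l t + s • deriv δl t, deriv q t + s • deriv δq t⟫ -
          ⟪l t + s • δl t, f (q t + s • δq t)⟫ -
          ⟪l t + s • δl t, l t + s • δl t⟫)) 0 = 0 := by
  have hδq₁ := hδq.of_le one_le_two
  have hδl₁ := hδl.of_le one_le_two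
  have hintegral := hasLineDerivAt_intervalIntegral_comp (contDiff_newLagrangian hf)
    (continuous_jet (hq.of_le one_le_two) (hl.of_le one_le_two)) (continuous_jet hδq₁ hδl₁) 0 T
  have hterminal := hasLineDerivAt_uncurry_of_differentiableAt
    (hφ.differentiable one_ne_zero (q T, deriv q T)) (δq T) (deriv δq T)
  have hpairingT := (hasDerivAt_add_smul (l T) (δl T) 0).inner ℝ
    (hasDerivAt_add_smul (deriv q T) (deriv δq T) 0)
  have hpairing0 := (hasDerivAt_add_smul (l 0) (δl 0) 0).inner ℝ (hasDerivAt_const 0 (deriv q 0))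
  refine (((hterminal.add hpairingT).sub hpairing0).add hintegral).deriv.trans ?_
  have hgrad_v : gradient (fun x => φ (q T) x) (deriv q T) = -l T := by rw [hbdv, neg_neg]
  rw [integral_fderiv_newLagrangian_of_adjointSystem hf hq hl hδq₁ hδl₁ hT.le heq1 heq2,
    ← hbdq, hgrad_v, hδq0]
  simp only [zero_smul, add_zero, inner_zero_right, inner_neg_left]
  ring

/-- Solutions of `q̈ = f(q) + λ`, `λ̈ = (Df(q))ᵀ λ` satisfying the boundary
conditions `λ̇(T) = ∇_q φ(q(T), q̇(T))`, `λ(T) = -∇_v φ(q(T), q̇(T))` make the first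
variation of the new augmented objective vanish, for variations vanishing (to first
order) at `t = 0`. -/
theorem firstVariation_new_augmented_objective_eq_zero (n : ℕ) (T : ℝ) (hT : 0 < T)
    (f : EuclideanSpace ℝ (Fin n) → EuclideanSpace ℝ (Fin n)) (hf : ContDiff ℝ 1 f)
    (φ : EuclideanSpace ℝ (Fin n) → EuclideanSpace ℝ (Fin n) → ℝ)
    (hφ : ContDiff ℝ 1 (Function.uncurry φ))
    (q l : ℝ → EuclideanSpace ℝ (Fin n))
    (hq : ContDiff ℝ 2 q) (hl : ContDiff ℝ 2 l)
    (heq1 : ∀ t ∈ Set.Icc (0 : ℝ) T, deriv (deriv q) t = f (q t) + l t)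
    (heq2 : ∀ t ∈ Set.Icc (0 : ℝ) T, deriv (deriv l) t = (fderiv ℝ f (q t)).adjoint (l t))
    (hbdq : deriv l T = gradient (fun x => φ x (deriv q T)) (q T))
    (hbdv : l T = -gradient (fun x => φ (q T) x) (deriv q T))
    (δq δl : ℝ → EuclideanSpace ℝ (Fin n))
    (hδq : ContDiff ℝ 2 δq) (hδl : ContDiff ℝ 2 δl)
    (hδq0 : δq 0 = 0) (hδqdot0 : deriv δq 0 = 0) :
    deriv (fun s : ℝ =>
      φ (q T + s • δq T) (deriv q T + s • deriv δq T) +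
      ⟪l T + s • δl T, deriv q T + s • deriv δq T⟫ -
      ⟪l 0 + s • δl 0, deriv q 0⟫ +
      ∫ t in (0 : ℝ)..T,
        ((1 / 2 : ℝ) * ‖l t + s • δl t‖ ^ 2 -
          ⟪deriv l t + s • deriv δl t, deriv q t + s • deriv δq t⟫ -
          ⟪l t + s • δl t, f (q t + s • δq t)⟫ -
          ⟪l t + s • δl t, l t + s • δl t⟫)) 0 = 0 :=
  firstVariation_new_augmented_objective_eq_zero_general n T hT f hf φ hφ q l hq hl heq1 heq2 hbdq
    hbdv δq δl hδq hδl hδq0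
end

section
/- Let g be an invertible n×n real matrix such that f(g q) = g f(q) for all q ∈ ℝⁿ. Then the invariance L̃(g q, (g⁻¹)ᵀ λ, g v, (g⁻¹)ᵀ w) = L̃(q, λ, v, w) holds for all (q, λ, v, w) ∈ (ℝⁿ)⁴ if and only if g is orthogonal, i.e. gᵀ g = I. -/
/-!
The pairings `⟨w, v⟩` and `⟨λ, f q⟩` are invariant under the lifted action of any invertible `g`:
the adjoint of `(g⁻¹)ᵀ` is `g⁻¹`, and `f` commutes with `g`. So invariance of `L̃` reduces to
`‖(g⁻¹)ᵀ λ‖ = ‖λ‖` for all `λ`, i.e. to `(g⁻¹)ᵀ` being orthogonal, which holds iff `g` is.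
-/

open scoped RealInnerProductSpace

open Matrix WithLp

namespace Matrix

variable {n : Type*} [Fintype n] [DecidableEq n]

section Unitary

variable {α : Type*} [CommRing α] [StarRing α]

theorem nonsing_inv_mem_unitaryGroup_iff {A : Matrix n n α} :
    A⁻¹ ∈ unitaryGroup n α ↔ A ∈ unitaryGroup n α := by
  have inv_mem : ∀ B ∈ unitaryGroup n α, B⁻¹ ∈ unitaryGroup n α := fun B hB => by
    rw [inv_eq_left_inv (mem_unitaryGroup_iff'.mp hB)]
    exact Unitary.star_mem hB
  refine ⟨fun h => ?_, inv_mem A⟩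
  have hA : IsUnit A.det :=
    isUnit_nonsing_inv_det_iff.mp (isUnit_det_of_right_inverse (mem_unitaryGroup_iff.mp h))
  simpa [nonsing_inv_nonsing_inv A hA] using inv_mem _ h

theorem transpose_nonsing_inv_mem_unitaryGroup_iff {A : Matrix n n α} :
    A⁻¹ᵀ ∈ unitaryGroup n α ↔ A ∈ unitaryGroup n α := by
  rw [transpose_mem_unitaryGroup_iff, nonsing_inv_mem_unitaryGroup_iff]

end Unitary

section Euclidean

variable {𝕜 : Type*} [RCLike 𝕜]

theorem norm_toLp_mulVec_eq_iff {A : Matrix n n 𝕜} :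
    (∀ x : EuclideanSpace 𝕜 n, ‖toLp 2 (A *ᵥ ofLp x)‖ = ‖x‖) ↔ A ∈ unitaryGroup n 𝕜 := by
  rw [mem_unitaryGroup_iff', ← (EquivLike.injective (toEuclideanCLM (n := n) (𝕜 := 𝕜))).eq_iff,
    map_mul (toEuclideanCLM (n := n) (𝕜 := 𝕜)), map_star (toEuclideanCLM (n := n) (𝕜 := 𝕜)),
    map_one, ContinuousLinearMap.star_eq_adjoint, ContinuousLinearMap.mul_def]
  exact (toEuclideanCLM (n := n) (𝕜 := 𝕜) A).norm_map_iff_adjoint_comp_self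

theorem inner_toLp_mulVec_toLp_mulVec (A B : Matrix n n 𝕜) (x y : EuclideanSpace 𝕜 n) :
    inner 𝕜 (toLp 2 (A *ᵥ ofLp x)) (toLp 2 (B *ᵥ ofLp y)) =
      inner 𝕜 x (toLp 2 ((Aᴴ * B) *ᵥ ofLp y)) := by
  simp only [← toEuclideanCLM_toLp, toLp_ofLp]
  rw [← star_eq_conjTranspose, map_mul (toEuclideanCLM (n := n) (𝕜 := 𝕜)),
    map_star (toEuclideanCLM (n := n) (𝕜 := 𝕜)), ContinuousLinearMap.star_eq_adjoint,
    mul_apply_eq_comp, ContinuousLinearMap.adjoint_inner_right]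

theorem inner_transpose_nonsing_inv_mulVec_mulVec {g : Matrix n n ℝ} (hg : IsUnit g)
    (x y : EuclideanSpace ℝ n) : ⟪toLp 2 (g⁻¹ᵀ *ᵥ ofLp x), toLp 2 (g *ᵥ ofLp y)⟫ = ⟪x, y⟫ := by
  rw [inner_toLp_mulVec_toLp_mulVec, conjTranspose_eq_transpose_of_trivial, transpose_transpose,
    nonsing_inv_mul _ ((isUnit_iff_isUnit_det g).mp hg), one_mulVec, toLp_ofLp]

end Euclidean

end Matrix

theorem newLagrangian_invariant_iff_orthogonal_general (n : ℕ)
    (f : EuclideanSpace ℝ (Fin n) → EuclideanSpace ℝ (Fin n))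
    (Lt : EuclideanSpace ℝ (Fin n) → EuclideanSpace ℝ (Fin n) → EuclideanSpace ℝ (Fin n) →
      EuclideanSpace ℝ (Fin n) → ℝ)
    (hLt : ∀ q l v w, Lt q l v w = -⟪w, v⟫ - ⟪l, f q⟫ - (1 / 2 : ℝ) * ‖l‖ ^ 2)
    (g : Matrix (Fin n) (Fin n) ℝ) (hg : IsUnit g)
    (hequiv : ∀ q : EuclideanSpace ℝ (Fin n), f (WithLp.toLp 2 (g.mulVec q)) = WithLp.toLp 2 (g.mulVec (f q))) :
    (∀ q l v w : EuclideanSpace ℝ (Fin n),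
      Lt (WithLp.toLp 2 (g.mulVec q)) (WithLp.toLp 2 ((g⁻¹).transpose.mulVec l))
        (WithLp.toLp 2 (g.mulVec v)) (WithLp.toLp 2 ((g⁻¹).transpose.mulVec w))
        = Lt q l v w)
    ↔ g.transpose * g = 1 := by
  have lifted_Lt : ∀ q l v w,
      Lt (toLp 2 (g *ᵥ ofLp q)) (toLp 2 (g⁻¹ᵀ *ᵥ ofLp l)) (toLp 2 (g *ᵥ ofLp v))
        (toLp 2 (g⁻¹ᵀ *ᵥ ofLp w)) =
      Lt q l v w - (‖toLp 2 (g⁻¹ᵀ *ᵥ ofLp l)‖ ^ 2 - ‖l‖ ^ 2) / 2 := by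
    intro q l v w
    rw [hLt, hLt, hequiv, inner_transpose_nonsing_inv_mulVec_mulVec hg,
      inner_transpose_nonsing_inv_mulVec_mulVec hg]
    ring
  calc _ ↔ ∀ l : EuclideanSpace ℝ (Fin n), ‖toLp 2 (g⁻¹ᵀ *ᵥ ofLp l)‖ = ‖l‖ := by
        simp only [lifted_Lt, sub_eq_self, div_eq_zero_iff, two_ne_zero, or_false, sub_eq_zero,
          sq_eq_sq₀ (norm_nonneg _) (norm_nonneg _), forall_const]
    _ ↔ g ∈ unitaryGroup (Fin n) ℝ := norm_toLp_mulVec_eq_iff.trans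
        transpose_nonsing_inv_mem_unitaryGroup_iff
    _ ↔ gᵀ * g = 1 := by
        rw [mem_unitaryGroup_iff', star_eq_conjTranspose, conjTranspose_eq_transpose_of_trivial]

/-- For an invertible matrix `g` with `f(g q) = g f(q)`, the new Lagrangian
`L̃(q, λ, v, w) = -⟨w, v⟩ - ⟨λ, f q⟩ - ½‖λ‖²` is invariant under the lifted action
`(q, λ, v, w) ↦ (g q, (g⁻¹)ᵀ λ, g v, (g⁻¹)ᵀ w)` iff `g` is orthogonal (`gᵀ g = 1`). -/
theorem newLagrangian_invariant_iff_orthogonal (n : ℕ)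
    (f : EuclideanSpace ℝ (Fin n) → EuclideanSpace ℝ (Fin n)) (hf : ContDiff ℝ 1 f)
    (Lt : EuclideanSpace ℝ (Fin n) → EuclideanSpace ℝ (Fin n) → EuclideanSpace ℝ (Fin n) →
      EuclideanSpace ℝ (Fin n) → ℝ)
    (hLt : ∀ q l v w, Lt q l v w = -⟪w, v⟫ - ⟪l, f q⟫ - (1 / 2 : ℝ) * ‖l‖ ^ 2)
    (g : Matrix (Fin n) (Fin n) ℝ) (hg : IsUnit g)
    (hequiv : ∀ q : EuclideanSpace ℝ (Fin n), f (WithLp.toLp 2 (g.mulVec q)) = WithLp.toLp 2 (g.mulVec (f q))) :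
    (∀ q l v w : EuclideanSpace ℝ (Fin n),
      Lt (WithLp.toLp 2 (g.mulVec q)) (WithLp.toLp 2 ((g⁻¹).transpose.mulVec l))
        (WithLp.toLp 2 (g.mulVec v)) (WithLp.toLp 2 ((g⁻¹).transpose.mulVec w))
        = Lt q l v w)
    ↔ g.transpose * g = 1 :=
  newLagrangian_invariant_iff_orthogonal_general n f Lt hLt g hg hequiv
end

section
/- Let L : ℝᵐ × ℝᵐ → ℝ be continuously differentiable and let (g_s)_{s ∈ ℝ} be a family of m×m real matrices that is differentiable in s with g_0 = I, and assume the invariance L(g_s y, g_s ẏ) = L(y, ẏ) for all s ∈ ℝ and (y, ẏ) ∈ ℝᵐ × ℝᵐ. If y : [0,T] → ℝᵐ is a C² curve such that t ↦ ∇_{ẏ} L(y(t), ẏ(t)) is differentiable and the Euler–Lagrange equation d/dt ∇_{ẏ} L(y, ẏ) = ∇_y L(y, ẏ) holds on [0,T], then the momentum map I(t) = ⟨ ∇_{ẏ} L(y(t), ẏ(t)), ξ y(t) ⟩, where ξ = (d/ds g_s)|_{s=0}, is constant on [0,T]. -/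
/-!
Differentiating the invariance `L (g s a) (g s b) = L a b` at `s = 0` gives
`⟪∇ₓ L (a, b), ξ a⟫ + ⟪∇ᵥ L (a, b), ξ b⟫ = 0` for all `a, b`. Along a solution `y` of the
Euler–Lagrange equation, the product rule gives
`d/dt ⟪∇ᵥ L (y, ẏ), ξ y⟫ = ⟪∇ₓ L (y, ẏ), ξ y⟫ + ⟪∇ᵥ L (y, ẏ), ξ ẏ⟫`,
which is this identity at `(a, b) = (y, ẏ)`, so the momentum map has zero derivative.
-/

open Set
open scoped RealInnerProductSpace

theorem Matrix.hasDerivAt_toLp_mulVec {𝕜 m n : Type*} [NontriviallyNormedField 𝕜] [Fintype m]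
    [Fintype n] {g : 𝕜 → Matrix m n 𝕜} {g' : Matrix m n 𝕜} {s : 𝕜}
    (hg : ∀ i j, HasDerivAt (fun s => g s i j) (g' i j) s) (v : n → 𝕜) :
    HasDerivAt (fun s => WithLp.toLp 2 ((g s).mulVec v)) (WithLp.toLp 2 (g'.mulVec v)) s :=
  (PiLp.hasFDerivAt_toLp 2 ((g s).mulVec v)).comp_hasDerivAt s <|
    hasDerivAt_pi.2 fun i => HasDerivAt.fun_sum fun j _ => (hg i j).mul_const (v j)

theorem HasFDerivAt.apply_eq_zero_of_comp_eq_const {𝕜 F G : Type*} [NontriviallyNormedField 𝕜]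
    [NormedAddCommGroup F] [NormedSpace 𝕜 F] [NormedAddCommGroup G] [NormedSpace 𝕜 G]
    {f : F → G} {D : F →L[𝕜] G} {γ : 𝕜 → F} {v : F} {s : 𝕜} (hf : HasFDerivAt f D (γ s))
    (hγ : HasDerivAt γ v s) (hconst : ∀ r, f (γ r) = f (γ s)) : D v = 0 := by
  have hcomp := hf.comp_hasDerivAt s hγ
  rw [show f ∘ γ = fun _ => f (γ s) from funext hconst] at hcomp
  exact hcomp.unique (hasDerivAt_const s _)

section Lagrangian

variable {E : Type*} [NormedAddCommGroup E] [InnerProductSpace ℝ E] [CompleteSpace E]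
  {L : E → E → ℝ}

theorem inner_gradient_add_inner_gradient_of_hasFDerivAt_uncurry {D : E × E →L[ℝ] ℝ} {a b : E}
    (hL : HasFDerivAt (Function.uncurry L) D (a, b)) (u w : E) :
    ⟪gradient (fun x => L x b) a, u⟫ + ⟪gradient (fun v => L a v) b, w⟫ = D (u, w) := by
  have hfst : HasFDerivAt (fun x => L x b) (D.comp (.inl ℝ E E)) a :=
    hL.comp (f := fun x => (x, b)) a (hasFDerivAt_prodMk_left a b)
  have hsnd : HasFDerivAt (fun v => L a v) (D.comp (.inr ℝ E E)) b :=
    hL.comp (f := fun v => (a, v)) b (hasFDerivAt_prodMk_right a b)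
  simp [hfst.fderiv, hsnd.fderiv, ← map_add]

theorem inner_gradient_add_inner_gradient_eq_zero_of_invariant {φ : ℝ → E → E} {X : E → E}
    (hφ0 : ∀ a, φ 0 a = a) (hX : ∀ a, HasDerivAt (fun s => φ s a) (X a) 0)
    (hinv : ∀ s a b, L (φ s a) (φ s b) = L a b) {a b : E}
    (hL : DifferentiableAt ℝ (Function.uncurry L) (a, b)) :
    ⟪gradient (fun x => L x b) a, X a⟫ + ⟪gradient (fun v => L a v) b, X b⟫ = 0 := by
  rw [inner_gradient_add_inner_gradient_of_hasFDerivAt_uncurry hL.hasFDerivAt]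
  refine HasFDerivAt.apply_eq_zero_of_comp_eq_const (f := Function.uncurry L)
    (γ := fun s => (φ s a, φ s b)) ?_ ((hX a).prodMk (hX b)) fun s => ?_
  · simpa only [hφ0] using hL.hasFDerivAt
  · simp only [Function.uncurry_apply_pair, hinv]

noncomputable def momentumMap (L : E → E → ℝ) (X : E →L[ℝ] E) (y y' : ℝ → E) (t : ℝ) : ℝ :=
  ⟪gradient (fun v => L (y t) v) (y' t), X (y t)⟫

theorem hasDerivAt_momentumMap_zero (hL : Differentiable ℝ (Function.uncurry L))
    {φ : ℝ → E → E} {X : E →L[ℝ] E} (hφ0 : ∀ a, φ 0 a = a)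
    (hX : ∀ a, HasDerivAt (fun s => φ s a) (X a) 0) (hinv : ∀ s a b, L (φ s a) (φ s b) = L a b)
    {y y' : ℝ → E} {t : ℝ} (hy : HasDerivAt y (y' t) t)
    (hEL : HasDerivAt (fun τ => gradient (fun v => L (y τ) v) (y' τ))
      (gradient (fun x => L x (y' t)) (y t)) t) :
    HasDerivAt (momentumMap L X y y') 0 t := by
  have hI := hEL.inner ℝ (X.hasFDerivAt.comp_hasDerivAt t hy)
  simp only [Function.comp_apply] at hI
  rwa [add_comm, inner_gradient_add_inner_gradient_eq_zero_of_invariant hφ0 hX hinv (hL _)] at hI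

theorem momentumMap_eq_of_eulerLagrange (hL : Differentiable ℝ (Function.uncurry L))
    {φ : ℝ → E → E} {X : E →L[ℝ] E} (hφ0 : ∀ a, φ 0 a = a)
    (hX : ∀ a, HasDerivAt (fun s => φ s a) (X a) 0) (hinv : ∀ s a b, L (φ s a) (φ s b) = L a b)
    {y y' : ℝ → E} {t₀ t₁ : ℝ} (hy : ∀ t ∈ Icc t₀ t₁, HasDerivAt y (y' t) t)
    (hEL : ∀ t ∈ Icc t₀ t₁, HasDerivAt (fun τ => gradient (fun v => L (y τ) v) (y' τ))
      (gradient (fun x => L x (y' t)) (y t)) t) :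
    ∀ t ∈ Icc t₀ t₁, momentumMap L X y y' t = momentumMap L X y y' t₀ := by
  have hI : ∀ t ∈ Icc t₀ t₁, HasDerivAt (momentumMap L X y y') 0 t := fun t ht =>
    hasDerivAt_momentumMap_zero hL hφ0 hX hinv (hy t ht) (hEL t ht)
  exact constant_of_has_deriv_right_zero
    (fun t ht => (hI t ht).continuousAt.continuousWithinAt)
    fun t ht => (hI t (Ico_subset_Icc_self ht)).hasDerivWithinAt

end Lagrangian

theorem noether_theorem_linear_symmetry_general (m : ℕ) (T : ℝ)
    (L : EuclideanSpace ℝ (Fin m) → EuclideanSpace ℝ (Fin m) → ℝ)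
    (hL : ContDiff ℝ 1 (Function.uncurry L))
    (g : ℝ → Matrix (Fin m) (Fin m) ℝ)
    (hg0 : g 0 = 1)
    (hgdiff : ∀ i j : Fin m, Differentiable ℝ fun s => g s i j)
    (hinv : ∀ (s : ℝ) (y ydot : EuclideanSpace ℝ (Fin m)),
      L (WithLp.toLp 2 ((g s).mulVec y)) (WithLp.toLp 2 ((g s).mulVec ydot)) = L y ydot)
    (ξ : Matrix (Fin m) (Fin m) ℝ)
    (hξ : ∀ i j : Fin m, ξ i j = deriv (fun s => g s i j) 0)
    (y : ℝ → EuclideanSpace ℝ (Fin m)) (hy : ContDiff ℝ 2 y)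
    (hmom : Differentiable ℝ fun t => gradient (fun v => L (y t) v) (deriv y t))
    (hEL : ∀ t ∈ Set.Icc (0 : ℝ) T,
      deriv (fun τ => gradient (fun v => L (y τ) v) (deriv y τ)) t
        = gradient (fun x => L x (deriv y t)) (y t)) :
    ∀ t₁ ∈ Set.Icc (0 : ℝ) T, ∀ t₂ ∈ Set.Icc (0 : ℝ) T,
      @inner ℝ (EuclideanSpace ℝ (Fin m)) _
          (gradient (fun v => L (y t₁) v) (deriv y t₁)) (WithLp.toLp 2 (ξ.mulVec (y t₁)))
        = @inner ℝ (EuclideanSpace ℝ (Fin m)) _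
          (gradient (fun v => L (y t₂) v) (deriv y t₂)) (WithLp.toLp 2 (ξ.mulVec (y t₂))) := by
  have hX : ∀ a : EuclideanSpace ℝ (Fin m),
      HasDerivAt (fun s => Matrix.toEuclideanCLM (n := Fin m) (𝕜 := ℝ) (g s) a)
        (Matrix.toEuclideanCLM (n := Fin m) (𝕜 := ℝ) ξ a) 0 := fun a =>
    Matrix.hasDerivAt_toLp_mulVec (fun i j => hξ i j ▸ (hgdiff i j 0).hasDerivAt) a
  have hconst := momentumMap_eq_of_eulerLagrange (hL.differentiable one_ne_zero)
    (fun a => by simp [hg0]) hX hinv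
    (fun t _ => (hy.differentiable (by norm_num) t).hasDerivAt)
    (fun t ht => hEL t ht ▸ (hmom t).hasDerivAt)
  intro t₁ h₁ t₂ h₂
  exact (hconst t₁ h₁).trans (hconst t₂ h₂).symm

/-- Noether's theorem for a one-parameter family of linear symmetries:
if `L(g_s y, g_s ẏ) = L(y, ẏ)` for a differentiable family of matrices `g_s` with
`g_0 = 1`, then along Euler–Lagrange solutions the momentum map
`I(t) = ⟨∇_ẏ L(y, ẏ), ξ y⟩`, `ξ = (d/ds g_s)|_{s=0}`, is constant. -/
theorem noether_theorem_linear_symmetry (m : ℕ) (T : ℝ) (hT : 0 < T)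
    (L : EuclideanSpace ℝ (Fin m) → EuclideanSpace ℝ (Fin m) → ℝ)
    (hL : ContDiff ℝ 1 (Function.uncurry L))
    (g : ℝ → Matrix (Fin m) (Fin m) ℝ)
    (hg0 : g 0 = 1)
    (hgdiff : ∀ i j : Fin m, Differentiable ℝ fun s => g s i j)
    (hinv : ∀ (s : ℝ) (y ydot : EuclideanSpace ℝ (Fin m)),
      L (WithLp.toLp 2 ((g s).mulVec y)) (WithLp.toLp 2 ((g s).mulVec ydot)) = L y ydot)
    (ξ : Matrix (Fin m) (Fin m) ℝ)
    (hξ : ∀ i j : Fin m, ξ i j = deriv (fun s => g s i j) 0)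
    (y : ℝ → EuclideanSpace ℝ (Fin m)) (hy : ContDiff ℝ 2 y)
    (hmom : Differentiable ℝ fun t => gradient (fun v => L (y t) v) (deriv y t))
    (hEL : ∀ t ∈ Set.Icc (0 : ℝ) T,
      deriv (fun τ => gradient (fun v => L (y τ) v) (deriv y τ)) t
        = gradient (fun x => L x (deriv y t)) (y t)) :
    ∀ t₁ ∈ Set.Icc (0 : ℝ) T, ∀ t₂ ∈ Set.Icc (0 : ℝ) T,
      @inner ℝ (EuclideanSpace ℝ (Fin m)) _
          (gradient (fun v => L (y t₁) v) (deriv y t₁)) (WithLp.toLp 2 (ξ.mulVec (y t₁)))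
        = @inner ℝ (EuclideanSpace ℝ (Fin m)) _
          (gradient (fun v => L (y t₂) v) (deriv y t₂)) (WithLp.toLp 2 (ξ.mulVec (y t₂))) :=
  noether_theorem_linear_symmetry_general m T L hL g hg0 hgdiff hinv ξ hξ y hy hmom hEL
end

section
/- Let n ∈ ℝ³ with ‖n‖ = 1 and let f : ℝ³ → ℝ³ be differentiable and satisfy the infinitesimal equivariance Df(q)(n × q) = n × f(q) for all q ∈ ℝ³. If q, λ : [0,T] → ℝ³ are C² curves with q̈ = f(q) + λ and λ̈ = (Df(q))ᵀ λ on [0,T], then the quantity t ↦ ⟨n, q̇(t) × λ(t) + λ̇(t) × q(t)⟩ is constant on [0,T]. -/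
/-!
Differentiating `⟨n, q̇ × λ + λ̇ × q⟩`, the terms `q̇ × λ̇` and `λ̇ × q̇` cancel, leaving
`⟨n, q̈ × λ + λ̈ × q⟩`. By the equations of motion `q̈ × λ = f(q) × λ`, while moving `Df(q)ᵀ`
across the triple product and using equivariance gives
`⟨n, Df(q)ᵀλ × q⟩ = -⟨λ, Df(q)(n × q)⟩ = -⟨λ, n × f(q)⟩ = -⟨n, f(q) × λ⟩`.
-/

open scoped RealInnerProductSpace

local notation "𝔼³" => EuclideanSpace ℝ (Fin 3)

noncomputable def euclideanCross : 𝔼³ →L[ℝ] 𝔼³ →L[ℝ] 𝔼³ :=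
  LinearMap.toContinuousBilinearMap <|
    (crossProduct.compl₁₂ (WithLp.linearEquiv 2 ℝ (Fin 3 → ℝ)).toLinearMap
      (WithLp.linearEquiv 2 ℝ (Fin 3 → ℝ)).toLinearMap).compr₂
      (WithLp.linearEquiv 2 ℝ (Fin 3 → ℝ)).symm.toLinearMap

namespace euclideanCross

@[simp] lemma apply (a b : 𝔼³) :
    euclideanCross a b = WithLp.toLp 2 (crossProduct (WithLp.ofLp a) (WithLp.ofLp b)) := rfl

lemma self (a : 𝔼³) : euclideanCross a a = 0 := by
  simp

lemma anticomm (a b : 𝔼³) : euclideanCross b a = -euclideanCross a b := by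
  simp [← WithLp.toLp_neg, cross_anticomm]

lemma inner_cyclic (a b c : 𝔼³) :
    ⟪a, euclideanCross b c⟫ = ⟪b, euclideanCross c a⟫ := by
  simp only [EuclideanSpace.inner_eq_star_dotProduct, apply, star_trivial,
    dotProduct_comm _ (WithLp.ofLp _)]
  exact triple_product_permutation _ _ _

end euclideanCross

open euclideanCross in
lemma inner_cross_adjoint_left {A : 𝔼³ →L[ℝ] 𝔼³} {n x y : 𝔼³}
    (hA : A (euclideanCross n x) = euclideanCross n y) (v : 𝔼³) :
    ⟪n, euclideanCross (A.adjoint v) x⟫ = ⟪n, euclideanCross v y⟫ := by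
  calc ⟪n, euclideanCross (A.adjoint v) x⟫
      = ⟪A.adjoint v, euclideanCross x n⟫ := inner_cyclic _ _ _
    _ = -⟪v, A (euclideanCross n x)⟫ := by
      rw [A.adjoint_inner_left, anticomm, map_neg, inner_neg_right]
    _ = ⟪n, euclideanCross v y⟫ := by
      rw [hA, inner_cyclic v, anticomm v y, inner_neg_right, neg_neg]

noncomputable def rotationalCharge (n : 𝔼³) (q l : ℝ → 𝔼³) (t : ℝ) : ℝ :=
  ⟪n, euclideanCross (deriv q t) (l t) + euclideanCross (deriv l t) (q t)⟫

lemma hasDerivAt_rotationalCharge (n : 𝔼³) {q l : ℝ → 𝔼³} {t : ℝ}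
    (hq : DifferentiableAt ℝ q t) (hq' : DifferentiableAt ℝ (deriv q) t)
    (hl : DifferentiableAt ℝ l t) (hl' : DifferentiableAt ℝ (deriv l) t) :
    HasDerivAt (rotationalCharge n q l)
      ⟪n, euclideanCross (deriv (deriv q) t) (l t) + euclideanCross (deriv (deriv l) t) (q t)⟫ t := by
  have hqlam := euclideanCross.hasDerivAt_of_bilinear
    (fun _ ↦ hq'.hasDerivAt) (fun _ ↦ hl.hasDerivAt)
  have hlamq := euclideanCross.hasDerivAt_of_bilinear
    (fun _ ↦ hl'.hasDerivAt) (fun _ ↦ hq.hasDerivAt)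
  refine ((hasDerivAt_const t n).inner ℝ (hqlam.add hlamq)).congr_deriv ?_
  rw [inner_zero_left, add_zero, euclideanCross.anticomm (deriv q t)]
  congr 1
  abel

lemma inner_cross_add_cross_eq_zero {A : 𝔼³ →L[ℝ] 𝔼³} {n x y v : 𝔼³}
    (hA : A (euclideanCross n x) = euclideanCross n y) :
    ⟪n, euclideanCross (y + v) v + euclideanCross (A.adjoint v) x⟫ = 0 := by
  rw [map_add, add_apply, euclideanCross.self, add_zero, inner_add_right,
    inner_cross_adjoint_left hA, euclideanCross.anticomm v y, inner_neg_right, neg_add_cancel]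

lemma is_const_on_Icc_of_hasDerivAt_zero {g : ℝ → ℝ} {a b : ℝ}
    (hg : ∀ t ∈ Set.Icc a b, HasDerivAt g 0 t) {x y : ℝ} (hx : x ∈ Set.Icc a b)
    (hy : y ∈ Set.Icc a b) : g x = g y := by
  have hcont : ContinuousOn g (Set.Icc a b) := fun t ht ↦
    (hg t ht).continuousAt.continuousWithinAt
  have hconst := constant_of_has_deriv_right_zero hcont fun t ht ↦
    (hg t (Set.Ico_subset_Icc_self ht)).hasDerivWithinAt
  exact (hconst x hx).trans (hconst y hy).symm

theorem conserved_quantity_rotational_symmetry_lagrangian_general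
    (T : ℝ)
    (nv : EuclideanSpace ℝ (Fin 3))
    (f : EuclideanSpace ℝ (Fin 3) → EuclideanSpace ℝ (Fin 3))
    (hequiv : ∀ q : EuclideanSpace ℝ (Fin 3),
      fderiv ℝ f q (WithLp.toLp 2 (crossProduct nv q)) = WithLp.toLp 2 (crossProduct nv (f q)))
    (q l : ℝ → EuclideanSpace ℝ (Fin 3))
    (hq : ContDiff ℝ 2 q) (hl : ContDiff ℝ 2 l)
    (heq1 : ∀ t ∈ Set.Icc (0 : ℝ) T, deriv (deriv q) t = f (q t) + l t)
    (heq2 : ∀ t ∈ Set.Icc (0 : ℝ) T,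
      deriv (deriv l) t = (fderiv ℝ f (q t)).adjoint (l t)) :
    ∀ t₁ ∈ Set.Icc (0 : ℝ) T, ∀ t₂ ∈ Set.Icc (0 : ℝ) T,
      @inner ℝ (EuclideanSpace ℝ (Fin 3)) _ nv
          (WithLp.toLp 2 (crossProduct (WithLp.ofLp (deriv q t₁)) (l t₁) + crossProduct (WithLp.ofLp (deriv l t₁)) (q t₁)))
        = @inner ℝ (EuclideanSpace ℝ (Fin 3)) _ nv
          (WithLp.toLp 2 (crossProduct (WithLp.ofLp (deriv q t₂)) (l t₂) + crossProduct (WithLp.ofLp (deriv l t₂)) (q t₂))) := by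
  intro t₁ ht₁ t₂ ht₂
  have hcharge (t : ℝ) (ht : t ∈ Set.Icc 0 T) : HasDerivAt (rotationalCharge nv q l) 0 t := by
    have h := hasDerivAt_rotationalCharge nv (hq.differentiable two_ne_zero t)
      (hq.differentiable_deriv_two t) (hl.differentiable two_ne_zero t)
      (hl.differentiable_deriv_two t)
    rwa [heq1 t ht, heq2 t ht, inner_cross_add_cross_eq_zero (hequiv (q t))] at h
  exact is_const_on_Icc_of_hasDerivAt_zero hcharge ht₁ ht₂

/-- For `f` infinitesimally equivariant under rotations about a unit vector
`n` (`Df(q)(n × q) = n × f(q)`), the quantity `⟨n, q̇ × λ + λ̇ × q⟩` is conserved along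
solutions of `q̈ = f(q) + λ`, `λ̈ = (Df(q))ᵀ λ`. -/
theorem conserved_quantity_rotational_symmetry_lagrangian
    (T : ℝ) (hT : 0 < T)
    (nv : EuclideanSpace ℝ (Fin 3)) (hn : ‖nv‖ = 1)
    (f : EuclideanSpace ℝ (Fin 3) → EuclideanSpace ℝ (Fin 3)) (hf : Differentiable ℝ f)
    (hequiv : ∀ q : EuclideanSpace ℝ (Fin 3),
      fderiv ℝ f q (WithLp.toLp 2 (crossProduct nv q)) = WithLp.toLp 2 (crossProduct nv (f q)))
    (q l : ℝ → EuclideanSpace ℝ (Fin 3))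
    (hq : ContDiff ℝ 2 q) (hl : ContDiff ℝ 2 l)
    (heq1 : ∀ t ∈ Set.Icc (0 : ℝ) T, deriv (deriv q) t = f (q t) + l t)
    (heq2 : ∀ t ∈ Set.Icc (0 : ℝ) T,
      deriv (deriv l) t = (fderiv ℝ f (q t)).adjoint (l t)) :
    ∀ t₁ ∈ Set.Icc (0 : ℝ) T, ∀ t₂ ∈ Set.Icc (0 : ℝ) T,
      @inner ℝ (EuclideanSpace ℝ (Fin 3)) _ nv
          (WithLp.toLp 2 (crossProduct (WithLp.ofLp (deriv q t₁)) (l t₁) + crossProduct (WithLp.ofLp (deriv l t₁)) (q t₁)))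
        = @inner ℝ (EuclideanSpace ℝ (Fin 3)) _ nv
          (WithLp.toLp 2 (crossProduct (WithLp.ofLp (deriv q t₂)) (l t₂) + crossProduct (WithLp.ofLp (deriv l t₂)) (q t₂))) :=
  conserved_quantity_rotational_symmetry_lagrangian_general T nv f hequiv q l hq hl heq1 heq2
end

section
/- Let n ∈ ℝ³ be a unit vector and let n̂ be the skew-symmetric matrix with n̂ x = n × x for all x ∈ ℝ³, i.e. n̂ has rows (0, -n₃, n₂), (n₃, 0, -n₁), (-n₂, n₁, 0). Then for every s ∈ ℝ, Rodrigues' rotation formula holds for the matrix exponential: exp(s n̂) = I₃ + sin(s) · n̂ + (1 - cos(s)) · n̂². -/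
/-!
Since `n̂³ = -‖n‖² n̂ = -n̂`, the odd powers of `n̂` are `±n̂` and the even positive powers are
`±n̂²`, with the signs of the sine and cosine series. So the exponential series of `s n̂` splits into
its odd part `sin s • n̂` and its even part `1 + (1 - cos s) • n̂²`.
-/

open scoped Nat Matrix

section PowThreeEqNeg

variable {R : Type*} [Ring R] {X : R}

theorem pow_two_mul_add_one_of_pow_three_eq_neg (h : X ^ 3 = -X) (k : ℕ) :
    X ^ (2 * k + 1) = (-1) ^ k * X := by
  induction k with
  | zero => simp
  | succ k ih =>
    calc X ^ (2 * (k + 1) + 1) = X ^ (2 * k + 1) * X ^ 2 := by rw [← pow_add]; ring_nf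
      _ = (-1) ^ k * X ^ 3 := by rw [ih]; noncomm_ring
      _ = (-1) ^ (k + 1) * X := by rw [h, pow_succ]; noncomm_ring

theorem pow_two_mul_add_two_of_pow_three_eq_neg (h : X ^ 3 = -X) (k : ℕ) :
    X ^ (2 * k + 2) = (-1) ^ k * X ^ 2 := by
  rw [pow_succ, pow_two_mul_add_one_of_pow_three_eq_neg h, mul_assoc, ← sq]

end PowThreeEqNeg

theorem Real.hasSum_one_sub_cos (s : ℝ) :
    HasSum (fun k : ℕ => (-1) ^ k * s ^ (2 * k + 2) / (2 * k + 2)!) (1 - Real.cos s) := by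
  have h := ((hasSum_nat_add_iff' 1).mpr (Real.hasSum_cos s)).neg
  simp only [Finset.sum_range_one, pow_zero, mul_zero, Nat.factorial_zero, Nat.cast_one, div_one,
    one_mul, neg_sub] at h
  have hterm : (fun k : ℕ => (-1 : ℝ) ^ k * s ^ (2 * k + 2) / (2 * k + 2)!)
      = fun k : ℕ => -((-1) ^ (k + 1) * s ^ (2 * (k + 1)) / (2 * (k + 1))!) := by
    ext k
    rw [pow_succ, mul_add]
    ring
  rw [hterm]
  exact h

theorem neg_one_pow_mul_eq_smul {R A : Type*} [CommRing R] [Ring A] [Algebra R A] (k : ℕ)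
    (Y : A) :
    (-1 : A) ^ k * Y = ((-1 : R) ^ k) • Y := by
  rw [Algebra.smul_def, map_pow, map_neg, map_one]

section TopologicalAlgebra

variable {A : Type*} [Ring A] [Algebra ℝ A] [TopologicalSpace A] [ContinuousSMul ℝ A] {X : A}

theorem hasSum_odd_expSeries_of_pow_three_eq_neg (h : X ^ 3 = -X) (s : ℝ) :
    HasSum (fun k : ℕ => ((2 * k + 1)! : ℝ)⁻¹ • (s • X) ^ (2 * k + 1)) (Real.sin s • X) := by
  convert (Real.hasSum_sin s).smul_const X using 2 with k
  rw [smul_pow, pow_two_mul_add_one_of_pow_three_eq_neg h, neg_one_pow_mul_eq_smul (R := ℝ),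
    smul_smul, smul_smul]
  ring_nf

theorem hasSum_even_expSeries_succ_of_pow_three_eq_neg (h : X ^ 3 = -X) (s : ℝ) :
    HasSum (fun k : ℕ => ((2 * k + 2)! : ℝ)⁻¹ • (s • X) ^ (2 * k + 2))
      ((1 - Real.cos s) • X ^ 2) := by
  convert (Real.hasSum_one_sub_cos s).smul_const (X ^ 2) using 2 with k
  rw [smul_pow, pow_two_mul_add_two_of_pow_three_eq_neg h, neg_one_pow_mul_eq_smul (R := ℝ),
    smul_smul, smul_smul]
  ring_nf

theorem exp_smul_of_pow_three_eq_neg [IsTopologicalRing A] [T2Space A] (h : X ^ 3 = -X) (s : ℝ) :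
    NormedSpace.exp (s • X) = 1 + Real.sin s • X + (1 - Real.cos s) • X ^ 2 := by
  have hsucc : HasSum (fun n : ℕ => ((n + 1)! : ℝ)⁻¹ • (s • X) ^ (n + 1))
      (Real.sin s • X + (1 - Real.cos s) • X ^ 2) :=
    HasSum.even_add_odd (f := fun n : ℕ => ((n + 1)! : ℝ)⁻¹ • (s • X) ^ (n + 1))
      (hasSum_odd_expSeries_of_pow_three_eq_neg h s)
      (hasSum_even_expSeries_succ_of_pow_three_eq_neg h s)
  have hall := (hasSum_nat_add_iff (f := fun n : ℕ => (n ! : ℝ)⁻¹ • (s • X) ^ n) 1).mp hsucc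
  calc NormedSpace.exp (s • X) = ∑' n : ℕ, (n ! : ℝ)⁻¹ • (s • X) ^ n :=
        congrFun (NormedSpace.exp_eq_tsum ℝ) _
    _ = 1 + Real.sin s • X + (1 - Real.cos s) • X ^ 2 := by
      rw [hall.tsum_eq, Finset.sum_range_one, pow_zero, Nat.factorial_zero, Nat.cast_one, inv_one,
        one_smul]
      abel

end TopologicalAlgebra

def crossMatrix {R : Type*} [Zero R] [Neg R] (v : Fin 3 → R) : Matrix (Fin 3) (Fin 3) R :=
  !![0, -v 2, v 1; v 2, 0, -v 0; -v 1, v 0, 0]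

theorem crossMatrix_pow_three {R : Type*} [CommRing R] (v : Fin 3 → R) :
    crossMatrix v ^ 3 = -(v ⬝ᵥ v) • crossMatrix v := by
  ext i j
  fin_cases i <;> fin_cases j <;>
    simp [crossMatrix, pow_succ, Matrix.mul_apply, Fin.sum_univ_three, dotProduct] <;> ring

theorem rodrigues_rotation_formula_general
    (nv : EuclideanSpace ℝ (Fin 3)) (hn : ‖nv‖ = 1)
    (nhat : Matrix (Fin 3) (Fin 3) ℝ)
    (hmat : nhat = !![0, -nv 2, nv 1; nv 2, 0, -nv 0; -nv 1, nv 0, 0]) :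
    ∀ s : ℝ,
      NormedSpace.exp (s • nhat)
        = 1 + Real.sin s • nhat + (1 - Real.cos s) • (nhat * nhat) := by
  intro s
  have hunit : nv.ofLp ⬝ᵥ nv.ofLp = 1 := by
    have h := real_inner_self_eq_norm_sq nv
    rwa [EuclideanSpace.inner_eq_star_dotProduct, star_trivial, hn, one_pow] at h
  have hcube : nhat ^ 3 = -nhat := by
    have h := crossMatrix_pow_three nv.ofLp
    rw [hunit, neg_one_smul] at h
    rw [hmat]
    exact h
  rw [exp_smul_of_pow_three_eq_neg hcube s, sq]

/-- Rodrigues' rotation formula: for a unit vector `n ∈ ℝ³` with associated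
skew matrix `n̂` (`n̂ x = n × x`, explicitly given below),
`exp(s n̂) = I₃ + sin(s) n̂ + (1 - cos(s)) n̂²` for every `s ∈ ℝ`. -/
theorem rodrigues_rotation_formula
    (nv : EuclideanSpace ℝ (Fin 3)) (hn : ‖nv‖ = 1)
    (nhat : Matrix (Fin 3) (Fin 3) ℝ)
    (hcross : ∀ x : EuclideanSpace ℝ (Fin 3), nhat.mulVec x = crossProduct nv x)
    (hmat : nhat = !![0, -nv 2, nv 1; nv 2, 0, -nv 0; -nv 1, nv 0, 0]) :
    ∀ s : ℝ,
      NormedSpace.exp (s • nhat)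
        = 1 + Real.sin s • nhat + (1 - Real.cos s) • (nhat * nhat) :=
  rodrigues_rotation_formula_general nv hn nhat hmat
end
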